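/- arXiv:1707.01650 — 3 statements merged into one kernel-verified Lean document; each statement's English description precedes it below -/
import Mathlib

section
/- Let G be a group, let N be the additive subgroup of the group ring ℤ[G] generated by the set {h - h⁻¹ : h ∈ G} together with the element 1, and let Λ̃ = ℤ[G]/N. For every g ∈ G with g ≠ 1, the image [g] of g in Λ̃ has infinite order; equivalently, the additive map ℤ → Λ̃ sending n to n·[g] is injective, so Λ̃ contains a subgroup isomorphic to ℤ generated by [g]. -/
/-- The additive subgroup `N` of the group ring `ℤ[G]` generated by the
elements `h - h⁻¹` for `h ∈ G` together with `1` (the group-ring element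
supported at the identity). -/
noncomputable def relatorSubgroup (G : Type*) [Group G] : AddSubgroup (MonoidAlgebra ℤ G) :=
  AddSubgroup.closure
    ({x : MonoidAlgebra ℤ G |
        ∃ h : G, x = MonoidAlgebra.of ℤ G h - MonoidAlgebra.of ℤ G h⁻¹} ∪ {1})

/-!
The additive functional `x ↦ x(g) + x(g⁻¹)` on `ℤ[G]` vanishes on every `h - h⁻¹` (the two
terms cancel) and, for `g ≠ 1`, on `1`; so it descends to `ℤ[G]/N`. There it sends `[g]` to
`1` or `2`, hence `n • [g]` to a nonzero multiple of `n`.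
-/

namespace MonoidAlgebra

variable {R G : Type*} [Group G]

noncomputable def symmCoeff [Semiring R] (g : G) : MonoidAlgebra R G →+ R :=
  (Finsupp.applyAddHom g + Finsupp.applyAddHom g⁻¹ : (G →₀ R) →+ R).comp
    coeffAddEquiv.toAddMonoidHom

theorem symmCoeff_apply [Semiring R] (g : G) (x : MonoidAlgebra R G) :
    symmCoeff g x = x.coeff g + x.coeff g⁻¹ :=
  rfl

theorem symmCoeff_of [Semiring R] [DecidableEq G] (g h : G) :
    symmCoeff g (of R G h) = (if h = g then 1 else 0) + (if h = g⁻¹ then 1 else 0) := by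
  simp [symmCoeff_apply, Finsupp.single_apply]

theorem symmCoeff_of_sub_of_inv [Ring R] (g h : G) :
    symmCoeff g (of R G h - of R G h⁻¹) = 0 := by
  classical
  simp only [map_sub, symmCoeff_of, inv_eq_iff_eq_inv, inv_inv]
  abel

theorem symmCoeff_one [Semiring R] {g : G} (hg : g ≠ 1) :
    symmCoeff g (1 : MonoidAlgebra R G) = 0 := by
  classical
  rw [← map_one (of R G), symmCoeff_of, if_neg hg.symm, if_neg (by simpa [eq_comm] using hg),
    add_zero]

theorem symmCoeff_of_self_ne_zero [Ring R] [CharZero R] (g : G) : symmCoeff g (of R G g) ≠ 0 := by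
  classical
  rw [symmCoeff_of, if_pos rfl]
  split_ifs <;> norm_num

end MonoidAlgebra

open MonoidAlgebra

theorem relatorSubgroup_le_ker_symmCoeff {G : Type*} [Group G] {g : G} (hg : g ≠ 1) :
    relatorSubgroup G ≤ (symmCoeff g).ker := by
  refine AddSubgroup.closure_le _ |>.mpr ?_
  rintro _ (⟨h, rfl⟩ | rfl)
  · exact symmCoeff_of_sub_of_inv g h
  · exact symmCoeff_one hg

/-- In the quotient `Λ̃ = ℤ[G]/N`, the image of any `g ≠ 1` has infinite
order: `n ↦ n • [g]` is injective, so `[g]` generates a subgroup of `Λ̃`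
isomorphic to `ℤ`. -/
theorem infinite_order_in_reduced_group_ring
    (G : Type*) [Group G] (g : G) (hg : g ≠ 1) :
    Function.Injective fun n : ℤ =>
      n • (QuotientAddGroup.mk (MonoidAlgebra.of ℤ G g) :
        MonoidAlgebra ℤ G ⧸ relatorSubgroup G) := by
  let φ := QuotientAddGroup.lift (relatorSubgroup G) (symmCoeff g)
    (relatorSubgroup_le_ker_symmCoeff hg)
  intro n m hnm
  have hφ : n * symmCoeff g (of ℤ G g) = m * symmCoeff g (of ℤ G g) := by
    simpa [φ, map_zsmul] using congrArg φ hnm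
  exact mul_right_cancel₀ (symmCoeff_of_self_ne_zero g) hφ
end

section
/- Let G be a group, let N be the additive subgroup of the group ring ℤ[G] generated by the set {h - h⁻¹ : h ∈ G} together with the element 1, and let Λ̃ = ℤ[G]/N. Suppose g, h ∈ G satisfy g ≠ 1, h ≠ 1, h ≠ g, and h ≠ g⁻¹. Then the images [g] and [h] in Λ̃ are ℤ-linearly independent: for all integers m and n, if m·[g] + n·[h] = 0 in Λ̃ then m = 0 and n = 0. In particular, for all integers m, n, the equality m·[g] = n·[h] in Λ̃ holds only when m = n = 0. -/
namespace MonoidAlgebra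

variable {R G : Type*} [Semiring R]

noncomputable def coeffSum [Monoid G] (S : Finset G) : MonoidAlgebra R G →+ R :=
  ∑ k ∈ S, (Finsupp.applyAddHom k).comp coeffAddEquiv.toAddMonoidHom

theorem coeffSum_single [Monoid G] [DecidableEq G] (S : Finset G) (k : G) (r : R) :
    coeffSum S (single k r) = if k ∈ S then r else 0 := by
  simp [coeffSum, Finsupp.single_apply]

theorem relatorSubgroup_le_ker_coeffSum [Group G] {S : Finset G}
    (hS : ∀ k ∈ S, k⁻¹ ∈ S) (hS1 : 1 ∉ S) :
    relatorSubgroup G ≤ (coeffSum S : MonoidAlgebra ℤ G →+ ℤ).ker := by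
  classical
  have inv_mem_iff (k : G) : k⁻¹ ∈ S ↔ k ∈ S := ⟨fun hk => inv_inv k ▸ hS _ hk, hS k⟩
  rw [relatorSubgroup, AddSubgroup.closure_le]
  rintro x (⟨k, rfl⟩ | rfl)
  · simp [coeffSum_single, inv_mem_iff]
  · simpa [one_def, coeffSum_single] using hS1

end MonoidAlgebra

open MonoidAlgebra

theorem eq_zero_of_zsmul_mk_of_add_zsmul_mk_of_eq_zero {G : Type*} [Group G] {g k : G}
    (hg : g ≠ 1) (hkg : k ≠ g) (hkg' : k ≠ g⁻¹) {m n : ℤ}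
    (h : m • (QuotientAddGroup.mk (of ℤ G g) : MonoidAlgebra ℤ G ⧸ relatorSubgroup G) +
      n • (QuotientAddGroup.mk (of ℤ G k) : MonoidAlgebra ℤ G ⧸ relatorSubgroup G) = 0) :
    m = 0 := by
  classical
  have hN := relatorSubgroup_le_ker_coeffSum (S := {g, g⁻¹})
    (by simp [or_comm]) (by simp [eq_comm, hg])
  simpa [coeffSum_single, hkg, hkg'] using congrArg (QuotientAddGroup.lift _ _ hN) h

/-- If `g ≠ 1`, `h ≠ 1`, `h ≠ g` and `h ≠ g⁻¹`, then the images `[g]` and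
`[h]` in `Λ̃ = ℤ[G]/N` are `ℤ`-linearly independent; in particular
`m • [g] = n • [h]` only when `m = n = 0`. -/
theorem linearIndependent_in_reduced_group_ring
    (G : Type*) [Group G] (g h : G)
    (hg : g ≠ 1) (hh : h ≠ 1) (hhg : h ≠ g) (hhg' : h ≠ g⁻¹) :
    (∀ m n : ℤ,
        m • (QuotientAddGroup.mk (MonoidAlgebra.of ℤ G g) :
              MonoidAlgebra ℤ G ⧸ relatorSubgroup G) +
          n • (QuotientAddGroup.mk (MonoidAlgebra.of ℤ G h) :
              MonoidAlgebra ℤ G ⧸ relatorSubgroup G) = 0 →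
        m = 0 ∧ n = 0) ∧
    (∀ m n : ℤ,
        m • (QuotientAddGroup.mk (MonoidAlgebra.of ℤ G g) :
              MonoidAlgebra ℤ G ⧸ relatorSubgroup G) =
          n • (QuotientAddGroup.mk (MonoidAlgebra.of ℤ G h) :
              MonoidAlgebra ℤ G ⧸ relatorSubgroup G) →
        m = 0 ∧ n = 0) := by
  have hgh' : g ≠ h⁻¹ := by rintro rfl; simp at hhg'
  have indep : ∀ m n : ℤ,
      m • (QuotientAddGroup.mk (of ℤ G g) : MonoidAlgebra ℤ G ⧸ relatorSubgroup G) +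
        n • (QuotientAddGroup.mk (of ℤ G h) : MonoidAlgebra ℤ G ⧸ relatorSubgroup G) = 0 →
        m = 0 ∧ n = 0 := fun m n hmn =>
    ⟨eq_zero_of_zsmul_mk_of_add_zsmul_mk_of_eq_zero hg hhg hhg' hmn,
      eq_zero_of_zsmul_mk_of_add_zsmul_mk_of_eq_zero hh hhg.symm hgh' ((add_comm _ _).trans hmn)⟩
  refine ⟨indep, fun m n hmn => ?_⟩
  obtain ⟨hm, hn⟩ := indep m (-n) (by rw [neg_smul, hmn, add_neg_cancel])
  exact ⟨hm, neg_eq_zero.mp hn⟩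
end

section
/- Let G be a nontrivial group generated by two elements γ and α satisfying the two relations γ²αγ⁻¹αγ⁻¹α⁻¹γα⁻¹γα⁻¹γ⁻¹αγ⁻¹α = 1 and γ⁻¹αγ⁻¹α²γαγ⁻²α³ = 1. Then γ ≠ 1. -/
theorem Subgroup.ne_one_or_ne_one_of_closure_pair_eq_top {G : Type*} [Group G] [Nontrivial G]
    {a b : G} (h : Subgroup.closure ({a, b} : Set G) = ⊤) : a ≠ 1 ∨ b ≠ 1 := by
  by_contra! hab
  obtain ⟨rfl, rfl⟩ := hab
  rw [Set.pair_eq_singleton, Subgroup.closure_singleton_one] at h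
  exact bot_ne_top h

theorem mazur_gamma_ne_one_general
    (G : Type*) [Group G] [Nontrivial G] (γ α : G)
    (hgen : Subgroup.closure ({γ, α} : Set G) = ⊤)
    (h₁ : γ ^ 2 * α * γ⁻¹ * α * γ⁻¹ * α⁻¹ * γ * α⁻¹ * γ * α⁻¹ * γ⁻¹ * α * γ⁻¹ * α = 1) :
    γ ≠ 1 := by
  intro hγ
  -- with `γ = 1` the first relator collapses to `α`, its exponent sum in `α`
  have hα : α = 1 := by
    subst hγ
    group at h₁
    simpa using h₁
  exact (Subgroup.ne_one_or_ne_one_of_closure_pair_eq_top hgen).elim (· hγ) (· hα)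

/-- If a nontrivial group `G` is generated by two elements `γ` and `α`
satisfying the two Wirtinger relations of the fundamental group of the
boundary of the Mazur manifold, then `γ ≠ 1`. -/
theorem mazur_gamma_ne_one
    (G : Type*) [Group G] [Nontrivial G] (γ α : G)
    (hgen : Subgroup.closure ({γ, α} : Set G) = ⊤)
    (h₁ : γ ^ 2 * α * γ⁻¹ * α * γ⁻¹ * α⁻¹ * γ * α⁻¹ * γ * α⁻¹ * γ⁻¹ * α * γ⁻¹ * α = 1)
    (h₂ : γ⁻¹ * α * γ⁻¹ * α ^ 2 * γ * α * γ⁻¹ ^ 2 * α ^ 3 = 1) :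
    γ ≠ 1 :=
  mazur_gamma_ne_one_general G γ α hgen h₁
end
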